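/- Let R = ℤ[s, s⁻¹, t, t⁻¹] and consider the free R-module with basis {u, v}. The quotient of R·u ⊕ R·v by the submodule generated by (1−t)u + v, (1−s+s²)u, and (1+st)v is isomorphic as an R-module to R/(R·(1−s+s²) + R·((1+st)(1−t))). -/

import Mathlib

/-- `R = ℤ[s,s⁻¹,t,t⁻¹]`, the group ring of the free abelian group with basis `{s, t}`. -/
noncomputable abbrev GroupRingZ2 : Type := AddMonoidAlgebra ℤ (ℤ × ℤ)

/-- The generator `s` of the group ring. -/
noncomputable def sGen : GroupRingZ2 := AddMonoidAlgebra.single (1, 0) 1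

/-- The generator `t` of the group ring. -/
noncomputable def tGen : GroupRingZ2 := AddMonoidAlgebra.single (0, 1) 1

/-- Basis vector `u` of `R²`. -/
noncomputable def uV : Fin 2 → GroupRingZ2 := Pi.single 0 1
/-- Basis vector `v` of `R²`. -/
noncomputable def vV : Fin 2 → GroupRingZ2 := Pi.single 1 1

/-- The submodule of `R²` generated by `(1−t)u + v`, `(1−s+s²)u` and `(1+st)v`. -/
noncomputable def imB3 : Submodule GroupRingZ2 (Fin 2 → GroupRingZ2) :=
  Submodule.span GroupRingZ2
    {(1 - tGen) • uV + vV, (1 - sGen + sGen ^ 2) • uV, (1 + sGen * tGen) • vV}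

/-!
With `a = 1 - t`, `b = 1 - s + s²`, `c = 1 + st`, eliminate `v` using the first relation:
`f ↦ f 0 - a * f 1` identifies `R² / R·(a u + v)` with `R`, and it sends the remaining
relations `b u` and `c v` to `b` and `-c a`.
-/

namespace Submodule

variable {R : Type*} [CommRing R] (a b c : R)

def twoGenRelations : Submodule R (Fin 2 → R) :=
  span R {a • Pi.single 0 1 + Pi.single 1 1, b • Pi.single 0 1, c • Pi.single 1 1}

def twoGenElim : (Fin 2 → R) →ₗ[R] R :=
  LinearMap.proj 0 - a • LinearMap.proj 1

@[simp]
lemma twoGenElim_apply (f : Fin 2 → R) : twoGenElim a f = f 0 - a * f 1 := rfl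

lemma twoGenRelations_le_ker_twoGenElim :
    twoGenRelations a b c ≤ LinearMap.ker ((Ideal.span {b, c * a}).mkQ ∘ₗ twoGenElim a) := by
  rw [twoGenRelations, span_le]
  rintro x (rfl | rfl | rfl) <;>
    simp only [SetLike.mem_coe, LinearMap.mem_ker, LinearMap.comp_apply, mkQ_apply,
      Quotient.mk_eq_zero, twoGenElim_apply, Pi.add_apply, Pi.smul_apply, Pi.single_eq_same,
      Pi.single_eq_of_ne zero_ne_one, Pi.single_eq_of_ne one_ne_zero, smul_eq_mul, mul_one,
      mul_zero, add_zero, zero_add, sub_zero, sub_self]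
  · exact zero_mem _
  · exact Ideal.subset_span (Set.mem_insert _ _)
  · rw [zero_sub, neg_mem_iff, mul_comm]
    exact Ideal.subset_span (Set.mem_insert_of_mem _ rfl)

lemma mul_smul_single_mem_twoGenRelations :
    (c * a) • Pi.single 0 1 ∈ twoGenRelations a b c := by
  have h : (c * a) • (Pi.single 0 1 : Fin 2 → R) =
      c • (a • Pi.single 0 1 + Pi.single 1 1) - c • Pi.single 1 1 := by
    module
  rw [h]
  exact sub_mem (smul_mem _ _ (subset_span (by simp))) (subset_span (by simp))

lemma span_le_ker_toSpanSingleton :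
    Ideal.span {b, c * a} ≤
      LinearMap.ker
        ((twoGenRelations a b c).mkQ ∘ₗ LinearMap.toSpanSingleton R _ (Pi.single 0 1)) := by
  rw [Ideal.span_le]
  rintro x (rfl | rfl)
  all_goals
    simp only [SetLike.mem_coe, LinearMap.mem_ker, LinearMap.comp_apply,
      LinearMap.toSpanSingleton_apply, mkQ_apply, Quotient.mk_eq_zero]
  · exact subset_span (by simp)
  · exact mul_smul_single_mem_twoGenRelations a b c

lemma twoGenElim_smul_single_sub_mem_twoGenRelations (f : Fin 2 → R) :
    twoGenElim a f • Pi.single 0 1 - f ∈ twoGenRelations a b c := by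
  have h : twoGenElim a f • Pi.single 0 1 - f =
      -(f 1 • (a • Pi.single 0 1 + Pi.single 1 1)) := by
    funext i
    fin_cases i <;> simp
    ring
  rw [h]
  exact neg_mem (smul_mem _ _ (subset_span (by simp)))

def quotientTwoGenRelationsEquiv :
    ((Fin 2 → R) ⧸ twoGenRelations a b c) ≃ₗ[R] R ⧸ Ideal.span {b, c * a} :=
  LinearEquiv.ofLinearMap
    ((twoGenRelations a b c).liftQ _ (twoGenRelations_le_ker_twoGenElim a b c))
    ((Ideal.span {b, c * a}).liftQ _ (span_le_ker_toSpanSingleton a b c))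
    (by
      refine LinearMap.ext fun r => ?_
      obtain ⟨r, rfl⟩ := mkQ_surjective _ r
      simp only [mkQ_apply, liftQ_apply, LinearMap.comp_apply, LinearMap.toSpanSingleton_apply]
      simp)
    (by
      refine LinearMap.ext fun f => ?_
      obtain ⟨f, rfl⟩ := mkQ_surjective _ f
      exact (Quotient.eq _).mpr (twoGenElim_smul_single_sub_mem_twoGenRelations a b c f))

end Submodule

/-- Let `R = ℤ[s,s⁻¹,t,t⁻¹]` and let `u, v` be a basis of the free `R`-module `R²`.
The quotient of `R²` by the submodule generated by `(1−t)u + v`, `(1−s+s²)u` and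
`(1+st)v` is isomorphic as an `R`-module to `R/(R·(1−s+s²) + R·((1+st)(1−t)))`.
(Type `B₃`.) -/
theorem quotient_B3 :
    Nonempty
      (((Fin 2 → GroupRingZ2) ⧸ imB3) ≃ₗ[GroupRingZ2]
        (GroupRingZ2 ⧸
          Ideal.span {1 - sGen + sGen ^ 2, (1 + sGen * tGen) * (1 - tGen)})) :=
  ⟨Submodule.quotientTwoGenRelationsEquiv (1 - tGen) _ _⟩
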